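/- arXiv:1311.2285 — 2 statements merged into one kernel-verified Lean document; each statement's English description precedes it below -/
import Mathlib

section
/- Let H be a set of infinite regular cardinals. Suppose that for every ν ∈ H there exists an ultrafilter D_ν (on some set) such that D_ν is ν-decomposable and every infinite regular cardinal μ for which D_ν is μ-decomposable belongs to H. Then for every family (X_j)_{j∈J} of nonempty GO spaces, if each X_j is H-compact then the product ∏_{j∈J} X_j (with the product topology) is H-compact. -/
universe u v

open Set Cardinal Filter Topology TopologicalSpace

section Defs

variable {X : Type u} [LinearOrder X]

/-- A subset `Y` of a linear order `X`, having no maximum, is `lam`-full in `X` on the right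
if for every `y ∈ Y` the set `⋃ y' ∈ Y, (y, y')` (intervals computed in `X`)
has cardinality at least `lam`. -/
def FullRight (lam : Cardinal.{u}) (Y : Set X) : Prop :=
  (¬ ∃ m ∈ Y, ∀ y ∈ Y, y ≤ m) ∧
    ∀ y ∈ Y, lam ≤ #(⋃ y' ∈ Y, Ioo y y')

/-- A subset `Y` of a linear order `X`, having no minimum, is `lam`-full in `X` on the left
if for every `y ∈ Y` the set `⋃ y' ∈ Y, (y', y)` (intervals computed in `X`)
has cardinality at least `lam`. -/
def FullLeft (lam : Cardinal.{u}) (Y : Set X) : Prop :=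
  (¬ ∃ m ∈ Y, ∀ y ∈ Y, m ≤ y) ∧
    ∀ y ∈ Y, lam ≤ #(⋃ y' ∈ Y, Ioo y' y)

/-- The pair `(A, B)` is a gap of the space `X`: `A`, `B` are open, `A ∪ B = X`,
every element of `A` is less than every element of `B`, `A` has no maximum and `B` has
no minimum (`A` or `B` may be empty). -/
def IsGap [TopologicalSpace X] (A B : Set X) : Prop :=
  IsOpen A ∧ IsOpen B ∧ A ∪ B = Set.univ ∧ (∀ a ∈ A, ∀ b ∈ B, a < b) ∧
    (¬ ∃ m ∈ A, ∀ a ∈ A, a ≤ m) ∧ (¬ ∃ m ∈ B, ∀ b ∈ B, m ≤ b)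

/-- The pair `(A, B)` is a pseudo-gap of the space `X`: `A`, `B` are open and nonempty,
`A ∪ B = X`, every element of `A` is less than every element of `B`, and either `A` has a
maximum and `B` has no minimum, or `A` has no maximum and `B` has a minimum. -/
def IsPseudoGap [TopologicalSpace X] (A B : Set X) : Prop :=
  IsOpen A ∧ IsOpen B ∧ A ∪ B = Set.univ ∧ (∀ a ∈ A, ∀ b ∈ B, a < b) ∧
    A.Nonempty ∧ B.Nonempty ∧
    (((∃ m ∈ A, ∀ a ∈ A, a ≤ m) ∧ ¬ ∃ m ∈ B, ∀ b ∈ B, m ≤ b) ∨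
      ((¬ ∃ m ∈ A, ∀ a ∈ A, a ≤ m) ∧ ∃ m ∈ B, ∀ b ∈ B, m ≤ b))

/-- The cofinality of `A`: the least cardinality of a subset of `A` cofinal in `A`. -/
noncomputable def cofinCard (A : Set X) : Cardinal.{u} :=
  sInf {c | ∃ S : Set X, S ⊆ A ∧ (∀ a ∈ A, ∃ s ∈ S, a ≤ s) ∧ c = #S}

/-- The coinitiality of `B`: the least cardinality of a subset of `B` coinitial in `B`. -/
noncomputable def coinitCard (B : Set X) : Cardinal.{u} :=
  sInf {c | ∃ S : Set X, S ⊆ B ∧ (∀ b ∈ B, ∃ s ∈ S, s ≤ b) ∧ c = #S}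

/-- `mu` is a type of the gap `(A, B)`: `mu` is the cofinality of `A` or the coinitiality
of `B`. -/
def IsGapType (mu : Cardinal.{u}) (A B : Set X) : Prop :=
  mu = cofinCard A ∨ mu = coinitCard B

/-- `mu` is the type of the pseudo-gap `(A, B)`: the cofinality of `A` if `B` has a minimum,
the coinitiality of `B` if `A` has a maximum. -/
def IsPseudoGapType (mu : Cardinal.{u}) (A B : Set X) : Prop :=
  ((∃ m ∈ B, ∀ b ∈ B, m ≤ b) ∧ mu = cofinCard A) ∨
    ((∃ m ∈ A, ∀ a ∈ A, a ≤ m) ∧ mu = coinitCard B)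

end Defs

/-- A topological space is `[ν, ν]`-compact if every open cover of cardinality at most `ν`
has a subcover of cardinality less than `ν`. -/
def NuNuCompact (X : Type u) [TopologicalSpace X] (ν : Cardinal.{u}) : Prop :=
  ∀ 𝒰 : Set (Set X), (∀ U ∈ 𝒰, IsOpen U) → ⋃₀ 𝒰 = Set.univ → #𝒰 ≤ ν →
    ∃ 𝒱 ⊆ 𝒰, #𝒱 < ν ∧ ⋃₀ 𝒱 = Set.univ

/-- A topological space is weakly `[ν, ν]`-compact if every open cover of cardinality at
most `ν` has a subfamily of cardinality less than `ν` whose union is dense. -/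
def WeakNuNuCompact (X : Type u) [TopologicalSpace X] (ν : Cardinal.{u}) : Prop :=
  ∀ 𝒰 : Set (Set X), (∀ U ∈ 𝒰, IsOpen U) → ⋃₀ 𝒰 = Set.univ → #𝒰 ≤ ν →
    ∃ 𝒱 ⊆ 𝒰, #𝒱 < ν ∧ Dense (⋃₀ 𝒱)

/-- A topological space is initially `lam`-compact if every open cover of cardinality at
most `lam` has a finite subcover. -/
def InitiallyCompact (X : Type u) [TopologicalSpace X] (lam : Cardinal.{u}) : Prop :=
  ∀ 𝒰 : Set (Set X), (∀ U ∈ 𝒰, IsOpen U) → ⋃₀ 𝒰 = Set.univ → #𝒰 ≤ lam →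
    ∃ 𝒱 ⊆ 𝒰, 𝒱.Finite ∧ ⋃₀ 𝒱 = Set.univ

/-- A topological space is weakly initially `lam`-compact if every open cover of cardinality
at most `lam` has a finite subfamily whose union is dense. -/
def WeakInitiallyCompact (X : Type u) [TopologicalSpace X] (lam : Cardinal.{u}) : Prop :=
  ∀ 𝒰 : Set (Set X), (∀ U ∈ 𝒰, IsOpen U) → ⋃₀ 𝒰 = Set.univ → #𝒰 ≤ lam →
    ∃ 𝒱 ⊆ 𝒰, 𝒱.Finite ∧ Dense (⋃₀ 𝒱)

/-- The sequence `x` `D`-converges to `p`: for every open neighbourhood `U` of `p`,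
`{i | x i ∈ U} ∈ D`. -/
def DConv {I : Type v} {X : Type u} [TopologicalSpace X] (D : Ultrafilter I)
    (x : I → X) (p : X) : Prop :=
  ∀ U : Set X, IsOpen U → p ∈ U → {i | x i ∈ U} ∈ D

/-- `X` is `D`-compact: every `I`-indexed sequence of elements of `X` `D`-converges to some
point of `X`. -/
def DCompact {I : Type v} (D : Ultrafilter I) (X : Type u) [TopologicalSpace X] : Prop :=
  ∀ x : I → X, ∃ p : X, DConv D x p

/-- `p` is a `D`-limit point of the sequence of sets `Y`: for every neighbourhood `U`
of `p`, `{i | U ∩ Y i ≠ ∅} ∈ D`. -/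
def DLimitPt {I : Type v} {X : Type u} [TopologicalSpace X] (D : Ultrafilter I)
    (Y : I → Set X) (p : X) : Prop :=
  ∀ U ∈ nhds p, {i | (U ∩ Y i).Nonempty} ∈ D

/-- `X` is `D`-pseudocompact: every `I`-indexed sequence of nonempty open sets of `X` has a
`D`-limit point. -/
def DPseudocompact {I : Type v} (D : Ultrafilter I) (X : Type u) [TopologicalSpace X] : Prop :=
  ∀ O : I → Set X, (∀ i, IsOpen (O i)) → (∀ i, (O i).Nonempty) → ∃ p : X, DLimitPt D O p

/-- The ultrafilter `D` is `ν`-decomposable: there is `f : I → ν` such that the preimage of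
every subset of `ν` of cardinality less than `ν` is not in `D`. -/
def Decomposable {I : Type v} (D : Ultrafilter I) (ν : Cardinal.{u}) : Prop :=
  ∃ f : I → ν.ord.ToType, ∀ S : Set ν.ord.ToType, #S < ν → f ⁻¹' S ∉ D

/-!
Fix `ν ∈ H` and `D = D_ν`. Since `D` is `ν`-decomposable, every `D`-compact space is
`[ν, ν]`-compact, and `D`-compactness passes to products, so it suffices that each factor is
`D`-compact. In a GO space `X`, an ultrafilter `F` (the image of `D` under a sequence) with no
limit point splits `X` into `L = {a | Ioi a ∈ F}` and `R = {b | Iio b ∈ F}`; up to reversing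
the order `R ∈ F`. Then `R` has no minimum and an open complement, and a strictly decreasing
coinitial sequence in `R` of regular length `μ` shows at the same time that `D` is
`μ`-decomposable, so `μ ∈ H`, and that `X` is not `[μ, μ]`-compact.
-/

section RegularCardinal

open Order

theorem Cardinal.IsRegular.exists_gt_of_mk_lt {μ : Cardinal.{u}} (hμ : μ.IsRegular)
    {S : Set μ.ord.ToType} (hS : #S < μ) : ∃ β, ∀ s ∈ S, s < β := by
  rw [← not_isCofinal_iff]
  intro hcof
  have := cof_le hcof
  rw [Ordinal.cof_toType, hμ.cof_ord] at this
  exact this.not_gt hS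

/-- The records of a well-ordering of `α` form a cofinal subset on which `<` is well-founded;
enumerating a cofinal subset of it of least order type gives the sequence. -/
theorem Order.exists_strictMono_isCofinal_range (α : Type u) [LinearOrder α] :
    ∃ f : (cof α).ord.ToType → α, StrictMono f ∧ IsCofinal (range f) := by
  let r := WellOrderingRel (α := α)
  let t : Set α := {a | ∀ b, r b a → b < a}
  have ht : IsCofinal t := isCofinal_setOfPred_imp_lt r
  have : WellFoundedLT t := by
    refine ⟨Subrelation.wf (fun {a b} hab => ?_)
      (InvImage.wf Subtype.val WellOrderingRel.isWellOrder.wf)⟩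
    rcases trichotomous_of r a.1 b.1 with h | h | h
    · exact h
    · exact absurd (Subtype.ext h ▸ hab) (lt_irrefl _)
    · exact absurd (a.2 _ h) (not_lt.2 hab.le)
  obtain ⟨s, hs, hstype⟩ := Ordinal.exists_ord_cof_eq t
  rw [cof_eq_of_isCofinal ht, ← Ordinal.type_toType (cof α).ord] at hstype
  obtain ⟨e⟩ := Ordinal.type_eq.1 hstype
  refine ⟨fun β => (e.symm β : t), fun β γ h => e.symm.map_rel_iff.2 h, ?_⟩
  have hrange : range (fun β => (e.symm β : t) : _ → α) = Subtype.val '' s := by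
    rw [image_eq_range]
    exact e.symm.surjective.range_comp fun b : s => (b : α)
  exact hrange ▸ ht.trans hs

theorem Order.isRegular_cof (α : Type u) [LinearOrder α] [Nonempty α] [NoMaxOrder α] :
    (cof α).IsRegular := by
  obtain ⟨f, hf, hrange⟩ := exists_strictMono_isCofinal_range α
  refine ⟨aleph0_le_cof, ?_⟩
  rw [← Ordinal.cof_toType, cof_congr_of_strictMono hf hrange]

end RegularCardinal

/-- Together with `T2Space`, this makes `X` a GO space. -/
def HasOrdConnectedBasis (X : Type u) [LinearOrder X] [TopologicalSpace X] : Prop :=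
  ∃ 𝓑 : Set (Set X), IsTopologicalBasis 𝓑 ∧ ∀ s ∈ 𝓑, s.OrdConnected

namespace HasOrdConnectedBasis

variable {X : Type u} [LinearOrder X] [TopologicalSpace X]

theorem dual (hX : HasOrdConnectedBasis X) : HasOrdConnectedBasis Xᵒᵈ :=
  let ⟨𝓑, hB, hconv⟩ := hX
  ⟨𝓑, hB, fun s hs => (hconv s hs).dual⟩

theorem exists_ordConnected_mem_nhds_subset (hX : HasOrdConnectedBasis X) {a : X} {U : Set X}
    (hU : U ∈ 𝓝 a) : ∃ V ∈ 𝓝 a, V.OrdConnected ∧ V ⊆ U := by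
  obtain ⟨𝓑, hB, hconv⟩ := hX
  obtain ⟨V, hV𝓑, haV, hVU⟩ := hB.mem_nhds_iff.1 hU
  exact ⟨V, hB.mem_nhds hV𝓑 haV, hconv V hV𝓑, hVU⟩

theorem isOpen_Ioi [T1Space X] (hX : HasOrdConnectedBasis X) (b : X) : IsOpen (Ioi b) := by
  refine isOpen_iff_mem_nhds.2 fun a (hba : b < a) => ?_
  obtain ⟨V, hV, hconv, hVb⟩ :=
    hX.exists_ordConnected_mem_nhds_subset (compl_singleton_mem_nhds hba.ne')
  refine mem_of_superset hV fun z hz => not_le.1 fun hzb => ?_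
  exact hVb (hconv.out hz (mem_of_mem_nhds hV) ⟨hzb, hba.le⟩) rfl

theorem isOpen_Iio [T1Space X] (hX : HasOrdConnectedBasis X) (b : X) : IsOpen (Iio b) :=
  haveI : T1Space Xᵒᵈ := ‹T1Space X›
  hX.dual.isOpen_Ioi (OrderDual.toDual b)

end HasOrdConnectedBasis

section StrictAntiSequence

variable {X : Type u} [LinearOrder X] {R : Set X}

theorem Set.exists_isRegular_strictAnti_coinitial (hne : R.Nonempty)
    (hnomin : ∀ b ∈ R, ∃ c ∈ R, c < b) :
    ∃ μ : Cardinal.{u}, μ.IsRegular ∧ ∃ q : μ.ord.ToType → X,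
      StrictAnti q ∧ (∀ α, q α ∈ R) ∧ ∀ b ∈ R, ∃ α, q α ≤ b := by
  have : Nonempty Rᵒᵈ := hne.to_subtype
  have : NoMaxOrder Rᵒᵈ := ⟨fun b => by
    obtain ⟨c, hc, hcb⟩ := hnomin _ (OrderDual.ofDual b).2
    exact ⟨OrderDual.toDual ⟨c, hc⟩, hcb⟩⟩
  obtain ⟨f, hf, hcof⟩ := Order.exists_strictMono_isCofinal_range Rᵒᵈ
  refine ⟨_, Order.isRegular_cof Rᵒᵈ, fun α => (OrderDual.ofDual (f α) : R),
    fun α β h => hf h, fun α => (OrderDual.ofDual (f α)).2, fun b hb => ?_⟩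
  obtain ⟨_, ⟨α, rfl⟩, hα⟩ := hcof (OrderDual.toDual ⟨b, hb⟩)
  exact ⟨α, hα⟩

variable {μ : Cardinal.{u}} {q : μ.ord.ToType → X}

/-- The decomposition sends `z ∈ R` to an index `α` with `q α ≤ z`: a set of indices of size
`< μ` is bounded by some `β`, and its preimage misses `R ∩ Iio (q β) ∈ F`. -/
theorem decomposable_of_strictAnti (hμ : μ.IsRegular) (hq : StrictAnti q)
    (hcoinit : ∀ b ∈ R, ∃ α, q α ≤ b) {F : Ultrafilter X} (hR : R ∈ F)
    (hlt : ∀ α, Iio (q α) ∈ F) : Decomposable F μ := by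
  classical
  have : Nonempty μ.ord.ToType := Ordinal.nonempty_toType_iff.2 hμ.ord_pos.ne'
  let g : X → μ.ord.ToType := fun z => if h : ∃ α, q α ≤ z then h.choose else Classical.arbitrary _
  have hg : ∀ z ∈ R, q (g z) ≤ z := fun z hz => by
    simp only [g, dif_pos (hcoinit z hz)]
    exact (hcoinit z hz).choose_spec
  refine ⟨g, fun S hS hSF => ?_⟩
  obtain ⟨β, hβ⟩ := hμ.exists_gt_of_mk_lt hS
  obtain ⟨z, hzS, hzR, hzβ⟩ := Filter.nonempty_of_mem (inter_mem hSF (inter_mem hR (hlt β)))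
  exact (hq.antitone (hβ _ hzS).le).not_gt ((hg z hzR).trans_lt hzβ)

/-- The rays `Ioi (q α)` together with `Rᶜ` form an open cover of size `μ` with no smaller
subcover, since the points `q β` escape any `< μ` of the rays. -/
theorem not_nuNuCompact_of_strictAnti [TopologicalSpace X] (hIoi : ∀ a : X, IsOpen (Ioi a))
    (hR : IsOpen Rᶜ) (hμ : μ.IsRegular) (hq : StrictAnti q) (hqR : ∀ α, q α ∈ R)
    (hcoinit : ∀ b ∈ R, ∃ α, q α ≤ b) : ¬ NuNuCompact X μ := by
  intro hcpt
  have : NoMaxOrder μ.ord.ToType := Cardinal.noMaxOrder hμ.aleph0_le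
  let ray : μ.ord.ToType → Set X := fun α => Ioi (q α)
  have hray : Function.Injective ray := fun α β h => hq.injective <| by
    simpa only [ray, Ioi_inj] using h
  obtain ⟨𝒱, h𝒱, h𝒱card, h𝒱cover⟩ := hcpt (insert Rᶜ (range ray))
    (by rintro U (rfl | ⟨α, rfl⟩) <;> first | exact hR | exact hIoi _)
    (by
      refine eq_univ_of_forall fun z => ?_
      by_cases hz : z ∈ R
      · obtain ⟨α, hα⟩ := hcoinit z hz
        obtain ⟨β, hβ⟩ := exists_gt α
        exact ⟨ray β, mem_insert_of_mem _ ⟨β, rfl⟩, (hq hβ).trans_le hα⟩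
      · exact ⟨Rᶜ, mem_insert _ _, hz⟩)
    (calc #(insert Rᶜ (range ray) : Set (Set X)) ≤ #(range ray) + 1 := mk_insert_le
      _ ≤ μ + 1 := by gcongr; exact mk_range_le.trans (mk_ord_toType μ).le
      _ = μ := add_one_eq hμ.aleph0_le)
  obtain ⟨β, hβ⟩ := hμ.exists_gt_of_mk_lt
    ((mk_preimage_of_injective ray 𝒱 hray).trans_lt h𝒱card)
  obtain ⟨V, hV, hβV⟩ : q β ∈ ⋃₀ 𝒱 := h𝒱cover ▸ mem_univ _
  rcases h𝒱 hV with rfl | ⟨α, rfl⟩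
  · exact hβV (hqR β)
  · exact (hq (hβ α hV)).not_gt hβV

end StrictAntiSequence

section GOSpace

variable {X : Type u} [LinearOrder X] [TopologicalSpace X]

theorem HasOrdConnectedBasis.isOpen_compl_setOf_Iio_mem (hX : HasOrdConnectedBasis X)
    {F : Ultrafilter X} (hF : ∀ p, ¬ (F : Filter X) ≤ 𝓝 p) : IsOpen {b | Iio b ∈ F}ᶜ := by
  refine isOpen_iff_mem_nhds.2 fun a (ha : Iio a ∉ F) => ?_
  obtain ⟨U, hU, hUF⟩ := Filter.not_le.1 (hF a)
  obtain ⟨V, hV, hconv, hVU⟩ := hX.exists_ordConnected_mem_nhds_subset hU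
  refine mem_of_superset hV fun z hz (hzF : Iio z ∈ F) => ?_
  have hsub : Iio z ⊆ Iio a ∪ V := fun y (hyz : y < z) =>
    (lt_or_ge y a).imp id fun hay => hconv.out (mem_of_mem_nhds hV) hz ⟨hay, hyz.le⟩
  rcases F.union_mem_iff.1 (mem_of_superset hzF hsub) with haF | hVF
  · exact ha haF
  · exact hUF (mem_of_superset hVF hVU)

theorem HasOrdConnectedBasis.exists_le_nhds_of_setOf_Iio_mem [T1Space X]
    (hX : HasOrdConnectedBasis X) {F : Ultrafilter X}
    (hcpt : ∀ μ : Cardinal.{u}, μ.IsRegular → Decomposable F μ → NuNuCompact X μ)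
    (hR : {b | Iio b ∈ F} ∈ F) : ∃ p, (F : Filter X) ≤ 𝓝 p := by
  by_contra! hF
  obtain ⟨μ, hμ, q, hq, hqR, hcoinit⟩ := Set.exists_isRegular_strictAnti_coinitial
    (Filter.nonempty_of_mem hR) fun b hb => Filter.nonempty_of_mem (inter_mem hR hb)
  exact not_nuNuCompact_of_strictAnti hX.isOpen_Ioi (hX.isOpen_compl_setOf_Iio_mem hF) hμ hq
    hqR hcoinit (hcpt μ hμ (decomposable_of_strictAnti hμ hq hcoinit hR hqR))

theorem HasOrdConnectedBasis.exists_le_nhds [T1Space X] (hX : HasOrdConnectedBasis X)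
    (F : Ultrafilter X)
    (hcpt : ∀ μ : Cardinal.{u}, μ.IsRegular → Decomposable F μ → NuNuCompact X μ) :
    ∃ p, (F : Filter X) ≤ 𝓝 p := by
  by_cases hatom : ∃ a, {a} ∈ F
  · obtain ⟨a, ha⟩ := hatom
    exact ⟨a, (le_pure_iff.2 ha).trans (pure_le_nhds a)⟩
  have hcut : {b | Iio b ∈ F} ∪ {b | Ioi b ∈ F} ∈ F := by
    refine mem_of_superset univ_mem fun a _ => ?_
    have : Iio a ∪ ({a} ∪ Ioi a) ∈ F := mem_of_superset univ_mem fun z _ => by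
      rcases lt_trichotomy z a with h | h | h <;> simp [h]
    rcases F.union_mem_iff.1 this with h | h
    · exact Or.inl h
    · exact Or.inr ((F.union_mem_iff.1 h).resolve_left (not_exists.1 hatom a))
  rcases F.union_mem_iff.1 hcut with hR | hL
  · exact hX.exists_le_nhds_of_setOf_Iio_mem hcpt hR
  · have : T1Space Xᵒᵈ := ‹T1Space X›
    exact hX.dual.exists_le_nhds_of_setOf_Iio_mem (F := F) hcpt hL

end GOSpace

section UltrafilterCompactness

variable {I : Type v} {X : Type u} [TopologicalSpace X] {D : Ultrafilter I}

theorem Decomposable.of_map {Y : Type*} {x : I → Y} {μ : Cardinal.{u}}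
    (h : Decomposable (D.map x) μ) : Decomposable D μ :=
  let ⟨f, hf⟩ := h
  ⟨f ∘ x, hf⟩

theorem dConv_iff_tendsto {x : I → X} {p : X} : DConv D x p ↔ Tendsto x D (𝓝 p) := by
  simp only [(nhds_basis_opens p).tendsto_right_iff, DConv, and_imp]
  exact forall_congr' fun U => forall_comm

theorem DCompact.pi {J : Type*} {X : J → Type u} [∀ j, TopologicalSpace (X j)]
    (h : ∀ j, DCompact D (X j)) : DCompact D (∀ j, X j) := fun x => by
  choose p hp using fun j => h j fun i => x i j
  exact ⟨p, dConv_iff_tendsto.2 (tendsto_pi_nhds.2 fun j => dConv_iff_tendsto.1 (hp j))⟩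

theorem HasOrdConnectedBasis.dCompact {X : Type u} [LinearOrder X] [TopologicalSpace X]
    [T1Space X] (hX : HasOrdConnectedBasis X) (D : Ultrafilter I)
    (hcpt : ∀ μ : Cardinal.{u}, μ.IsRegular → Decomposable D μ → NuNuCompact X μ) :
    DCompact D X := fun x =>
  let ⟨p, hp⟩ := hX.exists_le_nhds (D.map x) fun μ hμ hdec => hcpt μ hμ hdec.of_map
  ⟨p, dConv_iff_tendsto.2 hp⟩

/-- Index an open cover by `ν` and pick `pt α` outside the members of index `< α`. Along a
decomposition `h`, a `D`-limit of `pt ∘ h` lies in some member `U`, which forces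
`h i ≤ index U` for `D`-almost all `i`. -/
theorem DCompact.nuNuCompact {ν : Cardinal.{u}} (hν : ℵ₀ ≤ ν) (hdec : Decomposable D ν)
    (hX : DCompact D X) : NuNuCompact X ν := by
  intro 𝒰 hopen hcover hcard
  by_contra! hno
  have : NoMaxOrder ν.ord.ToType := Cardinal.noMaxOrder hν
  obtain ⟨f⟩ : Nonempty (𝒰 ↪ ν.ord.ToType) := by rwa [← Cardinal.le_def, mk_ord_toType]
  have hpt : ∀ α, ∃ z, z ∉ ⋃₀ (Subtype.val '' (f ⁻¹' Iio α)) := fun α => by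
    by_contra! h
    refine hno _ (image_subset_iff.2 fun U _ => U.2) ?_ (eq_univ_of_forall h)
    exact (mk_image_le.trans (mk_preimage_of_injective _ _ f.injective)).trans_lt
      (by simpa using mk_Iio_lt α)
  choose pt hpt using hpt
  obtain ⟨h, hh⟩ := hdec
  obtain ⟨p, hp⟩ := hX (pt ∘ h)
  obtain ⟨U, hU, hpU⟩ : p ∈ ⋃₀ 𝒰 := hcover ▸ mem_univ p
  obtain ⟨β, hβ⟩ := exists_gt (f ⟨U, hU⟩)
  refine hh (Iio β) (by simpa using mk_Iio_lt β)
    (mem_of_superset (hp U (hopen U hU) hpU) fun i hi => ?_)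
  by_contra! hiβ
  exact hpt (h i) ⟨U, ⟨⟨U, hU⟩, hβ.trans_le (not_lt.1 hiβ), rfl⟩, hi⟩

end UltrafilterCompactness

theorem stmt12_general (H : Set Cardinal.{u}) (hH : ∀ ν ∈ H, ν.IsRegular)
    (hD : ∀ ν ∈ H, ∃ (I : Type u) (D : Ultrafilter I), Decomposable D ν ∧
      ∀ μ : Cardinal.{u}, ℵ₀ ≤ μ → μ.IsRegular → Decomposable D μ → μ ∈ H)
    (J : Type u) (X : J → Type u) [∀ j, LinearOrder (X j)] [∀ j, TopologicalSpace (X j)]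
    [∀ j, T2Space (X j)]
    (hGO : ∀ j, ∃ 𝓑 : Set (Set (X j)), IsTopologicalBasis 𝓑 ∧ ∀ s ∈ 𝓑, s.OrdConnected)
    (hcpt : ∀ j, ∀ ν ∈ H, NuNuCompact (X j) ν) :
    ∀ ν ∈ H, NuNuCompact (∀ j, X j) ν := by
  intro ν hν
  obtain ⟨I, D, hdec, hdecH⟩ := hD ν hν
  have hfactor : ∀ j, DCompact D (X j) := fun j =>
    HasOrdConnectedBasis.dCompact (hGO j) D fun μ hμ hμdec =>
      hcpt j μ (hdecH μ hμ.aleph0_le hμ hμdec)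
  exact (DCompact.pi hfactor).nuNuCompact (hH ν hν).aleph0_le hdec

/-- If for every `ν ∈ H` there is an ultrafilter `D_ν` which is `ν`-decomposable and all of
whose infinite regular decomposability cardinals lie in `H`, then any product of
`H`-compact GO spaces is `H`-compact. -/
theorem stmt12 (H : Set Cardinal.{u}) (hH : ∀ ν ∈ H, ν.IsRegular)
    (hD : ∀ ν ∈ H, ∃ (I : Type u) (D : Ultrafilter I), Decomposable D ν ∧
      ∀ μ : Cardinal.{u}, ℵ₀ ≤ μ → μ.IsRegular → Decomposable D μ → μ ∈ H)
    (J : Type u) (X : J → Type u) [∀ j, LinearOrder (X j)] [∀ j, TopologicalSpace (X j)]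
    [∀ j, T2Space (X j)] (hne : ∀ j, Nonempty (X j))
    (hGO : ∀ j, ∃ 𝓑 : Set (Set (X j)), IsTopologicalBasis 𝓑 ∧ ∀ s ∈ 𝓑, s.OrdConnected)
    (hcpt : ∀ j, ∀ ν ∈ H, NuNuCompact (X j) ν) :
    ∀ ν ∈ H, NuNuCompact (∀ j, X j) ν :=
  stmt12_general H hH hD J X hGO hcpt
end

section
/- Let λ be an infinite cardinal and let X be a GO space. Then X is initially λ-compact if and only if X is λ-bounded, that is, every subset of X of cardinality ≤ λ has compact closure. -/
universe u v

open Set Cardinal Filter Topology TopologicalSpace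

/-!
Let `ℵ₀ ≤ lam`. If every set of size `≤ lam` has compact closure, pick for each finite subfamily
of a cover of size `≤ lam` a point it misses; the closure of these `≤ lam` points is compact, so
some finite subfamily covers it, including the point chosen for that subfamily.

Conversely, the closure of a set `S` with `#S ≤ lam` is a closed, hence initially
`lam`-compact, GO space in which `S` is dense, so it suffices to show that such a space is
compact. Take a free ultrafilter `U` and the cut `{a | Ici a ∈ U}`. If the cut has a largest
element `m`, then `U → m`: an open `t ∋ m` outside `U`, together with `Iio m` and the rays
`Ioi s` for `s ∈ S`, `s > m`, would cover the space by `≤ lam` open sets none of which lies in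
`U`, and then so would a finite subfamily, which is impossible. The case of a least element of
`{a | Iic a ∈ U}` is dual, and if neither exists, the rays `Iio s` and `Ioi s` for `s ∈ S` on
the two sides of the cut form such a cover.
-/

section GO

variable {X : Type u} [LinearOrder X] [TopologicalSpace X]

theorem isOpen_Ioi_of_ordConnected_basis [T1Space X] {𝓑 : Set (Set X)}
    (h𝓑 : IsTopologicalBasis 𝓑) (hconv : ∀ s ∈ 𝓑, s.OrdConnected) (a : X) :
    IsOpen (Ioi a) := by
  refine isOpen_iff_mem_nhds.2 fun x hx => ?_
  obtain ⟨s, hs, hxs, hsa⟩ :=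
    h𝓑.exists_subset_of_mem_open (show x ∈ ({a}ᶜ : Set X) from hx.ne') isOpen_compl_singleton
  exact mem_of_superset (h𝓑.mem_nhds hs hxs) fun y hy =>
    not_le.1 fun hya => hsa ((hconv s hs).out hy hxs ⟨hya, hx.le⟩) rfl

theorem orderClosedTopology_of_isOpen_Ioi_Iio (hIoi : ∀ a : X, IsOpen (Ioi a))
    (hIio : ∀ a : X, IsOpen (Iio a)) : OrderClosedTopology X where
  isClosed_le' := isOpen_compl_iff.1 <| isOpen_prod_iff.2 fun a b (h : ¬a ≤ b) => by
    rw [not_le] at h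
    by_cases hz : ∃ z, b < z ∧ z < a
    · obtain ⟨z, hbz, hza⟩ := hz
      exact ⟨Ioi z, Iio z, hIoi z, hIio z, hza, hbz, fun p hp => not_le.2 (hp.2.trans hp.1)⟩
    · exact ⟨Ioi b, Iio a, hIoi b, hIio a, h, h,
        fun p hp hle => hz ⟨p.1, hp.1, lt_of_le_of_lt hle hp.2⟩⟩

theorem orderClosedTopology_of_ordConnected_basis [T1Space X] {𝓑 : Set (Set X)}
    (h𝓑 : IsTopologicalBasis 𝓑) (hconv : ∀ s ∈ 𝓑, s.OrdConnected) : OrderClosedTopology X :=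
  have : T1Space Xᵒᵈ := ‹T1Space X›
  orderClosedTopology_of_isOpen_Ioi_Iio (isOpen_Ioi_of_ordConnected_basis h𝓑 hconv)
    (isOpen_Ioi_of_ordConnected_basis (X := Xᵒᵈ) h𝓑 fun s hs => (hconv s hs).dual)

end GO

theorem Cardinal.mk_insert_le_of_le {α : Type u} {s : Set α} {a : α} {c : Cardinal.{u}}
    (hc : ℵ₀ ≤ c) (hs : #s ≤ c) : #(insert a s : Set α) ≤ c :=
  mk_insert_le.trans <| (add_le_add hs le_rfl).trans (add_one_eq hc).le

section InitiallyCompact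

variable {X : Type u} [TopologicalSpace X] {lam : Cardinal.{u}}

theorem InitiallyCompact.exists_mem_ultrafilter (hIC : InitiallyCompact X lam)
    (U : Ultrafilter X) {𝒰 : Set (Set X)} (hopen : ∀ V ∈ 𝒰, IsOpen V) (hcover : ⋃₀ 𝒰 = Set.univ)
    (hcard : #𝒰 ≤ lam) : ∃ V ∈ 𝒰, V ∈ U := by
  obtain ⟨𝒱, h𝒱𝒰, h𝒱fin, h𝒱cover⟩ := hIC 𝒰 hopen hcover hcard
  obtain ⟨V, hV, hVU⟩ := (Ultrafilter.finite_sUnion_mem_iff h𝒱fin).1 (h𝒱cover ▸ univ_mem)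
  exact ⟨V, h𝒱𝒰 hV, hVU⟩

theorem IsClosed.initiallyCompact (hlam : ℵ₀ ≤ lam) (hIC : InitiallyCompact X lam) {C : Set X}
    (hC : IsClosed C) : InitiallyCompact C lam := by
  intro 𝒰 hopen hcover hcard
  choose! V hVopen hV using fun u hu => isOpen_induced_iff.1 (hopen u hu)
  have hVinj : InjOn V 𝒰 := fun u hu u' hu' h => by rw [← hV u hu, ← hV u' hu', h]
  have hcover' : ⋃₀ insert Cᶜ (V '' 𝒰) = Set.univ := by
    refine eq_univ_of_forall fun x => ?_
    by_cases hx : x ∈ C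
    · obtain ⟨u, hu, hxu⟩ := mem_sUnion.1 (hcover ▸ mem_univ (⟨x, hx⟩ : C))
      exact ⟨V u, mem_insert_of_mem _ (mem_image_of_mem V hu), by rwa [← hV u hu] at hxu⟩
    · exact ⟨Cᶜ, mem_insert _ _, hx⟩
  obtain ⟨𝒱, h𝒱, h𝒱fin, h𝒱cover⟩ := hIC _
    (by rintro _ (rfl | ⟨u, hu, rfl⟩); exacts [hC.isOpen_compl, hVopen u hu]) hcover'
    (mk_insert_le_of_le hlam (mk_image_le.trans hcard))
  refine ⟨𝒰 ∩ V ⁻¹' 𝒱, inter_subset_left,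
    Finite.of_finite_image (h𝒱fin.subset (image_subset_iff.2 inter_subset_right))
      (hVinj.mono inter_subset_left), eq_univ_of_forall fun y => ?_⟩
  obtain ⟨v, hv, hyv⟩ := mem_sUnion.1 (h𝒱cover ▸ mem_univ (y : X))
  rcases h𝒱 hv with rfl | ⟨u, hu, rfl⟩
  · exact absurd y.2 hyv
  · exact ⟨u, ⟨hu, hv⟩, by rwa [← hV u hu]⟩

theorem initiallyCompact_of_isCompact_closure (hlam : ℵ₀ ≤ lam)
    (h : ∀ S : Set X, #S ≤ lam → IsCompact (closure S)) : InitiallyCompact X lam := by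
  classical
  intro 𝒰 hopen hcover hcard
  by_contra! hno
  have hpt : ∀ t : Finset 𝒰, ∃ x, x ∉ ⋃ u ∈ t, (u : Set X) := fun t => by
    have := hno _ (image_subset_iff.2 fun u _ => u.2) (t.finite_toSet.image Subtype.val)
    rwa [sUnion_image, ne_univ_iff_exists_notMem] at this
  choose f hf using hpt
  have hcardf : #(range f) ≤ lam := mk_range_le.trans <|
    (mk_le_of_surjective List.toFinset_surjective).trans <|
      (mk_list_le_max _).trans (max_le hlam (by simpa using hcard))
  obtain ⟨t, ht⟩ := (h _ hcardf).elim_finite_subcover (fun u : 𝒰 => (u : Set X))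
    (fun u => hopen u u.2) fun x _ => by
      obtain ⟨u, hu, hxu⟩ := mem_sUnion.1 (hcover ▸ mem_univ x)
      exact mem_iUnion.2 ⟨⟨u, hu⟩, hxu⟩
  exact hf t (ht (subset_closure (mem_range_self t)))

end InitiallyCompact

section Order

variable {X : Type u} [LinearOrder X] [TopologicalSpace X] [OrderClosedTopology X]
  {lam : Cardinal.{u}} {S : Set X}

theorem le_nhds_of_isGreatest_setOf_Ici_mem (hlam : ℵ₀ ≤ lam) (hIC : InitiallyCompact X lam)
    (hS : Dense S) (hScard : #S ≤ lam) {U : Ultrafilter X} (hU : ∀ x, {x} ∉ U) {m : X}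
    (hm : IsGreatest {a | Ici a ∈ U} m) : (U : Filter X) ≤ 𝓝 m := by
  have hIio : ∀ {a}, m < a → Iio a ∈ U := fun ha => by
    rw [← compl_Ici]
    exact U.compl_mem_iff_notMem.2 fun h => (hm.2 h).not_gt ha
  have hIoi : Ioi m ∈ U := by
    have : Ici m ∈ U := hm.1
    rw [← Ioi_insert, insert_eq, Ultrafilter.union_mem_iff] at this
    exact this.resolve_left (hU m)
  refine (nhds_basis_opens m).ge_iff.2 fun t ⟨hmt, ht⟩ => ?_
  by_contra htU
  have hcover : ⋃₀ insert (Iio m ∪ t) (Ioi '' (S ∩ Ioi m)) = Set.univ := by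
    refine eq_univ_of_forall fun x => ?_
    rcases lt_trichotomy x m with hxm | rfl | hmx
    · exact ⟨_, mem_insert _ _, Or.inl hxm⟩
    · exact ⟨_, mem_insert _ _, Or.inr hmt⟩
    · obtain ⟨s, hsS, hms, hsx⟩ :=
        hS.exists_mem_open isOpen_Ioo (U.nonempty_of_mem (inter_mem hIoi (hIio hmx)))
      exact ⟨Ioi s, mem_insert_of_mem _ ⟨s, ⟨hsS, hms⟩, rfl⟩, hsx⟩
  obtain ⟨V, hV, hVU⟩ := hIC.exists_mem_ultrafilter U
    (by rintro _ (rfl | ⟨s, -, rfl⟩); exacts [isOpen_Iio.union ht, isOpen_Ioi]) hcover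
    (mk_insert_le_of_le hlam <| mk_image_le.trans <|
      (mk_le_mk_of_subset inter_subset_left).trans hScard)
  rcases hV with rfl | ⟨s, ⟨-, hms⟩, rfl⟩
  · rcases Ultrafilter.union_mem_iff.1 hVU with h | h
    · obtain ⟨x, hx, hx'⟩ := U.nonempty_of_mem (inter_mem h hm.1)
      exact not_le.2 hx hx'
    · exact htU h
  · obtain ⟨x, hx, hx'⟩ := U.nonempty_of_mem (inter_mem hVU (hIio hms))
    exact lt_asymm hx hx'

theorem exists_gt_Ici_mem_of_forall_not_isGreatest (hS : Dense S) {U : Ultrafilter X}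
    (hA : ∀ m, ¬IsGreatest {a | Ici a ∈ U} m) {x : X} (hx : Ici x ∈ U) :
    ∃ s ∈ S, x < s ∧ Ici s ∈ U := by
  have hgt : ∀ y, Ici y ∈ U → ∃ a, y < a ∧ Ici a ∈ U := fun y hy => by
    simpa [IsGreatest, upperBounds, hy, and_comm] using hA y
  obtain ⟨a, hxa, ha⟩ := hgt x hx
  obtain ⟨b, hab, hb⟩ := hgt a ha
  obtain ⟨s, hsS, hxs, hsb⟩ := hS.exists_mem_open isOpen_Ioo ⟨a, hxa, hab⟩
  exact ⟨s, hsS, hxs, U.mem_of_superset hb (Ici_subset_Ici.2 hsb.le)⟩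

theorem false_of_forall_not_isGreatest_of_forall_not_isLeast (hlam : ℵ₀ ≤ lam)
    (hIC : InitiallyCompact X lam) (hS : Dense S) (hScard : #S ≤ lam) (U : Ultrafilter X)
    (hA : ∀ m, ¬IsGreatest {a | Ici a ∈ U} m) (hC : ∀ m, ¬IsLeast {a | Iic a ∈ U} m) :
    False := by
  have hcover : ⋃₀ (Iio '' {s ∈ S | Ici s ∈ U} ∪ Ioi '' {s ∈ S | Iic s ∈ U}) = Set.univ := by
    refine eq_univ_of_forall fun x => ?_
    by_cases hx : Ici x ∈ U
    · obtain ⟨s, hsS, hxs, hs⟩ := exists_gt_Ici_mem_of_forall_not_isGreatest hS hA hx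
      exact ⟨Iio s, Or.inl ⟨s, ⟨hsS, hs⟩, rfl⟩, hxs⟩
    · have hx' : Iic x ∈ U := U.mem_of_superset
        (compl_Ici (a := x) ▸ U.compl_mem_iff_notMem.2 hx) Iio_subset_Iic_self
      obtain ⟨s, hsS, hsx, hs⟩ :=
        exists_gt_Ici_mem_of_forall_not_isGreatest (X := Xᵒᵈ) hS hC hx'
      exact ⟨Ioi s, Or.inr ⟨s, ⟨hsS, hs⟩, rfl⟩, hsx⟩
  have hcard : ∀ (f : X → Set X) (P : X → Prop), #(f '' {s ∈ S | P s}) ≤ lam := fun _ _ =>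
    mk_image_le.trans <| (mk_le_mk_of_subset fun _ h => h.1).trans hScard
  obtain ⟨V, hV, hVU⟩ := hIC.exists_mem_ultrafilter U
    (by rintro _ (⟨s, -, rfl⟩ | ⟨s, -, rfl⟩); exacts [isOpen_Iio, isOpen_Ioi]) hcover
    ((mk_union_le _ _).trans <| (add_le_add (hcard _ _) (hcard _ _)).trans (add_eq_self hlam).le)
  rcases hV with ⟨s, ⟨-, hs⟩, rfl⟩ | ⟨s, ⟨-, hs⟩, rfl⟩
  · exact U.compl_notMem hs (by rwa [compl_Ici])
  · exact U.compl_notMem hs (by rwa [compl_Iic])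

theorem compactSpace_of_initiallyCompact_of_dense (hlam : ℵ₀ ≤ lam)
    (hIC : InitiallyCompact X lam) (hS : Dense S) (hScard : #S ≤ lam) : CompactSpace X := by
  refine ⟨isCompact_iff_ultrafilter_le_nhds'.2 fun U _ => ?_⟩
  suffices ∃ x, (U : Filter X) ≤ 𝓝 x from this.imp fun x hx => ⟨mem_univ x, hx⟩
  by_cases hU : ∃ x, {x} ∈ U
  · exact hU.imp fun x hx => (le_pure_iff.2 hx).trans (pure_le_nhds x)
  push Not at hU
  by_cases hA : ∃ m, IsGreatest {a | Ici a ∈ U} m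
  · exact hA.imp fun m hm => le_nhds_of_isGreatest_setOf_Ici_mem hlam hIC hS hScard hU hm
  by_cases hC : ∃ m, IsLeast {a | Iic a ∈ U} m
  · exact hC.imp fun m hm =>
      le_nhds_of_isGreatest_setOf_Ici_mem (X := Xᵒᵈ) hlam hIC hS hScard hU hm
  push Not at hA hC
  exact (false_of_forall_not_isGreatest_of_forall_not_isLeast hlam hIC hS hScard U hA hC).elim

end Order

/-- A GO space is initially `lam`-compact iff it is `lam`-bounded: every subset of
cardinality at most `lam` has compact closure. -/
theorem stmt14 (lam : Cardinal.{u}) (hlam : ℵ₀ ≤ lam)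
    (X : Type u) [LinearOrder X] [TopologicalSpace X] [T2Space X]
    (hGO : ∃ 𝓑 : Set (Set X), IsTopologicalBasis 𝓑 ∧ ∀ s ∈ 𝓑, s.OrdConnected) :
    InitiallyCompact X lam ↔ ∀ S : Set X, #S ≤ lam → IsCompact (closure S) := by
  obtain ⟨𝓑, h𝓑, hconv⟩ := hGO
  have := orderClosedTopology_of_ordConnected_basis h𝓑 hconv
  refine ⟨fun hIC S hScard => ?_, initiallyCompact_of_isCompact_closure hlam⟩
  rw [isCompact_iff_compactSpace]
  refine compactSpace_of_initiallyCompact_of_dense hlam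
    (isClosed_closure.initiallyCompact hlam hIC) (S := Subtype.val ⁻¹' S) ?_
    ((mk_preimage_of_injective _ _ Subtype.val_injective).trans hScard)
  rw [Subtype.dense_iff, Subtype.image_preimage_coe, inter_eq_right.2 subset_closure]
end
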